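/- For every integer m ≥ 2, the natural density of relatively prime m-tuples of positive integers equals 1/ζ(m): as N → ∞, the number of m-tuples (a₁,...,a_m) with 1 ≤ aᵢ ≤ N and gcd(a₁,...,a_m) = 1, divided by N^m, converges to ζ(m)^{-1}. -/

import Mathlib

/-!
Möbius inversion `[g = 1] = ∑_{d ∣ g} μ(d)` counts the coprime tuples in `[1, N]^m` exactly as
`∑_{d ≤ N} μ(d) ⌊N/d⌋^m`. After dividing by `N^m`, the `d`-th term tends to `μ(d)/d^m` and is
bounded by `1/d^m`, which is summable for `m ≥ 2`; so by dominated convergence the density tends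
to `∑ μ(d)/d^m`, the Dirichlet series of `μ`, which is the inverse of that of `ζ`.
-/

open Filter Finset Topology ArithmeticFunction
open scoped ArithmeticFunction.Moebius ArithmeticFunction.zeta LSeries.notation

theorem sum_divisors_moebius (n : ℕ) :
    ∑ d ∈ n.divisors, (μ d : ℤ) = if n = 1 then 1 else 0 := by
  have := congrArg (· n) (coe_moebius_mul_coe_zeta (R := ℤ))
  simpa only [coe_mul_zeta_apply, one_apply, intCoe_apply, Int.cast_id] using this

theorem sum_range_ite_dvd_moebius {g N : ℕ} (hg : g ≠ 0) (hgN : g ≤ N) :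
    ∑ d ∈ range (N + 1), (if d ∣ g then (μ d : ℤ) else 0) = if g = 1 then 1 else 0 := by
  rw [← sum_divisors_moebius, ← sum_filter]
  congr 1
  ext d
  simp only [mem_filter, mem_range, Nat.mem_divisors, hg, ne_eq, not_false_eq_true, and_true,
    and_iff_right_iff_imp]
  exact fun hd => Nat.lt_succ_of_le ((Nat.le_of_dvd (Nat.pos_of_ne_zero hg) hd).trans hgN)

section

variable {ι : Type*} [Fintype ι] [DecidableEq ι]

theorem card_filter_dvd_gcd (N d : ℕ) :
    #{a ∈ Fintype.piFinset fun _ : ι => Icc 1 N | d ∣ univ.gcd a} = (N / d) ^ Fintype.card ι := by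
  have : {a ∈ Fintype.piFinset fun _ : ι => Icc 1 N | d ∣ univ.gcd a} =
      Fintype.piFinset fun _ : ι => {x ∈ Icc 1 N | d ∣ x} := by
    ext a
    simp [Finset.dvd_gcd_iff, forall_and]
  rw [this, Fintype.card_piFinset, prod_const, card_univ,
    show Icc 1 N = Ioc 0 N from Icc_add_one_left_eq_Ioc 0 N, Nat.Ioc_filter_dvd_card_eq_div]

theorem card_filter_gcd_eq_one [Nonempty ι] (N : ℕ) :
    (#{a ∈ Fintype.piFinset fun _ : ι => Icc 1 N | univ.gcd a = 1} : ℤ) =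
      ∑ d ∈ range (N + 1), μ d * ((N / d : ℕ) : ℤ) ^ Fintype.card ι := by
  obtain ⟨i⟩ := ‹Nonempty ι›
  have hgcd : ∀ a ∈ Fintype.piFinset fun _ : ι => Icc 1 N, univ.gcd a ≠ 0 ∧ univ.gcd a ≤ N := by
    intro a ha
    obtain ⟨h1, hN⟩ := mem_Icc.mp (Fintype.mem_piFinset.mp ha i)
    have hdvd : univ.gcd a ∣ a i := gcd_dvd (mem_univ i)
    exact ⟨fun h => by rw [h, zero_dvd_iff] at hdvd; omega, (Nat.le_of_dvd h1 hdvd).trans hN⟩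
  calc (#{a ∈ Fintype.piFinset fun _ : ι => Icc 1 N | univ.gcd a = 1} : ℤ)
      = ∑ a ∈ Fintype.piFinset fun _ : ι => Icc 1 N, if univ.gcd a = 1 then 1 else 0 := by
        rw [card_filter]; push_cast; rfl
    _ = ∑ a ∈ Fintype.piFinset fun _ : ι => Icc 1 N,
          ∑ d ∈ range (N + 1), if d ∣ univ.gcd a then (μ d : ℤ) else 0 :=
        sum_congr rfl fun a ha => (sum_range_ite_dvd_moebius (hgcd a ha).1 (hgcd a ha).2).symm
    _ = ∑ d ∈ range (N + 1), μ d * ((N / d : ℕ) : ℤ) ^ Fintype.card ι := by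
        rw [sum_comm]
        refine sum_congr rfl fun d _ => ?_
        rw [← sum_filter, sum_const, card_filter_dvd_gcd, nsmul_eq_mul, mul_comm, Nat.cast_pow]

theorem card_filter_gcd_eq_one_div_pow_eq_tsum [Nonempty ι] (N : ℕ) :
    (#{a ∈ Fintype.piFinset fun _ : ι => Icc 1 N | univ.gcd a = 1} : ℝ) /
        (N : ℝ) ^ Fintype.card ι =
      ∑' d : ℕ, μ d * (((N / d : ℕ) : ℝ) / N) ^ Fintype.card ι := by
  rw [tsum_eq_sum (s := range (N + 1)) fun d hd => ?_]
  · have := congrArg (Int.cast : ℤ → ℝ) (card_filter_gcd_eq_one (ι := ι) N)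
    simp only [Int.cast_natCast, Int.cast_sum, Int.cast_mul, Int.cast_pow] at this
    rw [this, sum_div]
    exact sum_congr rfl fun d _ => by rw [div_pow, mul_div_assoc]
  · rw [Nat.div_eq_of_lt (by simpa using hd)]
    simp [Fintype.card_ne_zero]

end

theorem tendsto_natCast_div_div_atTop (d : ℕ) :
    Tendsto (fun N : ℕ => ((N / d : ℕ) : ℝ) / N) atTop (𝓝 (1 / d)) := by
  rcases eq_or_ne d 0 with rfl | hd
  · simp
  have hd' : (0 : ℝ) < d := by positivity
  have hfloor : Tendsto (fun N : ℕ => (⌊(N : ℝ) / d⌋₊ : ℝ) / ((N : ℝ) / d) * (1 / d)) atTop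
      (𝓝 (1 * (1 / d))) :=
    (tendsto_nat_floor_div_atTop.comp (tendsto_natCast_atTop_atTop.atTop_div_const hd')).mul_const _
  rw [one_mul] at hfloor
  refine hfloor.congr' ?_
  filter_upwards [eventually_ne_atTop 0] with N hN
  rw [Nat.floor_div_eq_div]
  field_simp

theorem natCast_div_div_le (N d : ℕ) : ((N / d : ℕ) : ℝ) / N ≤ 1 / d := by
  rcases eq_or_ne N 0 with rfl | hN
  · simp
  calc ((N / d : ℕ) : ℝ) / N ≤ ((N : ℝ) / d) / N := by gcongr; exact Nat.cast_div_le
    _ = 1 / d := by field_simp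

theorem norm_moebius_mul_div_div_pow_le (N d m : ℕ) :
    ‖(μ d : ℝ) * (((N / d : ℕ) : ℝ) / N) ^ m‖ ≤ 1 / (d : ℝ) ^ m :=
  calc ‖(μ d : ℝ) * (((N / d : ℕ) : ℝ) / N) ^ m‖
      = |(μ d : ℝ)| * (((N / d : ℕ) : ℝ) / N) ^ m := by
        rw [norm_mul, norm_pow, Real.norm_eq_abs, Real.norm_of_nonneg (by positivity)]
    _ ≤ 1 * (1 / d) ^ m := by
        gcongr ?_ * ?_ ^ m
        · exact_mod_cast abs_moebius_le_one
        · exact natCast_div_div_le N d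
    _ = 1 / (d : ℝ) ^ m := by rw [one_mul, one_div_pow]

theorem tsum_moebius_div_pow_eq_inv {m : ℕ} (hm : 1 < m) :
    ∑' n : ℕ, (μ n : ℝ) / (n : ℝ) ^ m = (∑' n : ℕ, 1 / ((n : ℝ) + 1) ^ m)⁻¹ := by
  have hs : 1 < (m : ℂ).re := by simpa using (by exact_mod_cast hm : (1 : ℝ) < m)
  have hζ : ((∑' n : ℕ, 1 / ((n : ℝ) + 1) ^ m : ℝ) : ℂ) = L ↗ζ m := by
    rw [LSeries_zeta_eq_riemannZeta hs, zeta_eq_tsum_one_div_nat_add_one_cpow hs,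
      Complex.ofReal_tsum]
    push_cast
    simp [Complex.cpow_natCast]
  have hμ : ((∑' n : ℕ, (μ n : ℝ) / (n : ℝ) ^ m : ℝ) : ℂ) = L ↗μ m := by
    rw [LSeries, Complex.ofReal_tsum]
    refine tsum_congr fun n => ?_
    rcases eq_or_ne n 0 with rfl | hn
    · simp
    · rw [LSeries.term_of_ne_zero hn, Complex.cpow_natCast]
      push_cast
      rfl
  apply Complex.ofReal_injective
  rw [Complex.ofReal_inv, hζ, hμ]
  exact eq_inv_of_mul_eq_one_right (LSeries_zeta_mul_Lseries_moebius hs)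

/-- For every integer `m ≥ 2`, the natural density of relatively prime `m`-tuples of
positive integers equals `1/ζ(m)`: the number of `m`-tuples `(a₁, ..., a_m)` with
`1 ≤ aᵢ ≤ N` and `gcd(a₁, ..., a_m) = 1`, divided by `N^m`, converges to
`(∑_{n=1}^∞ 1/n^m)⁻¹` as `N → ∞`. -/
theorem density_coprime_tuples (m : ℕ) (hm : 2 ≤ m) :
    Tendsto
      (fun N : ℕ =>
        ((((Fintype.piFinset fun _ : Fin m => Finset.Icc 1 N)).filter
            (fun a : Fin m → ℕ => Finset.univ.gcd a = 1)).card : ℝ) / (N : ℝ) ^ m)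
      atTop (nhds (∑' n : ℕ, 1 / ((n : ℝ) + 1) ^ m)⁻¹) := by
  have : Nonempty (Fin m) := ⟨⟨0, by omega⟩⟩
  rw [← tsum_moebius_div_pow_eq_inv hm]
  -- Summing over all of `ℕ` is harmless: the index `d = 0` contributes `μ 0 = 0`.
  refine (tendsto_tsum_of_dominated_convergence (Real.summable_one_div_nat_pow.mpr hm)
    (f := fun N d => (μ d : ℝ) * (((N / d : ℕ) : ℝ) / N) ^ m)
    (fun d => ?_) (Eventually.of_forall fun N d => ?_)).congr fun N => ?_
  · simpa [div_eq_mul_inv] using ((tendsto_natCast_div_div_atTop d).pow m).const_mul (μ d : ℝ)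
  · exact norm_moebius_mul_div_div_pow_le N d m
  · simpa using (card_filter_gcd_eq_one_div_pow_eq_tsum (ι := Fin m) N).symm
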